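/- Suppose each reverse transition probability factorizes over coordinates and unchanged coordinates contribute factor 1. Then for a monotone reverse trajectory from fully masked to fully unmasked, the log trajectory probability ratio between π_θ and π_ref equals ∑_{i=1}^{L} [ log μ_θ(y^{(i)} | τ_{t(i)}) − log μ_ref(y^{(i)} | τ_{t(i)}) ], where t(i) is the unique step at which coordinate i is newly unmasked and y = τ_0 is the terminal sequence. -/

import Mathlib

/-- combining Ratio Reduction with the partition property, the log
trajectory probability ratio equals `∑_{i=1}^{L} [log μ_θ(y^{(i)}|τ_{t(i)}) −
log μ_ref(y^{(i)}|τ_{t(i)})]`, where `t(i)` is the unique step at which coordinate `i`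
is newly unmasked. Here `a t i` (resp. `b t i`) denotes
`μ_θ(τ_{t-1}^{(i)}|τ_t)` (resp. `μ_ref`), whose value at step `t(i)` is that of the
terminal token `y^{(i)}` by monotonicity. -/
theorem stmt16 {V : Type*} [DecidableEq V] (L T : ℕ) (hT : 0 < T)
    (τ : ℕ → Fin L → Option V)
    (hfullmask : ∀ i, τ T i = none)
    (hfullclean : ∀ i, τ 0 i ≠ none)
    (hkeep : ∀ t i, 1 ≤ t → t ≤ T → τ t i ≠ none → τ (t - 1) i = τ t i)
    (hmask : ∀ t i, 1 ≤ t → t ≤ T → τ (t - 1) i = none → τ t i = none)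
    (I : ℕ → Finset (Fin L))
    (hI : ∀ t, I t = Finset.univ.filter (fun i => τ t i = none ∧ τ (t - 1) i ≠ none))
    (a b : ℕ → Fin L → ℝ)
    (ha : ∀ t i, 0 < a t i) (hb : ∀ t i, 0 < b t i)
    (Pθ Pref : ℕ → ℝ)
    (hPθ : ∀ t ∈ Finset.Icc 1 T, 0 < Pθ t)
    (hPref : ∀ t ∈ Finset.Icc 1 T, 0 < Pref t)
    (hratio : ∀ t ∈ Finset.Icc 1 T, Pθ t / Pref t = ∏ i ∈ I t, a t i / b t i) :
    ∃ tstep : Fin L → ℕ,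
      (∀ i, tstep i ∈ Finset.Icc 1 T ∧ i ∈ I (tstep i)) ∧
      Real.log ((∏ t ∈ Finset.Icc 1 T, Pθ t) / ∏ t ∈ Finset.Icc 1 T, Pref t)
        = ∑ i : Fin L, (Real.log (a (tstep i) i) - Real.log (b (tstep i) i)) := by

  classical
  -- masking is forward-monotone
  have mono : ∀ i, ∀ u ≤ T, ∀ s ≤ u, τ s i = none → τ u i = none := by
    intro i u
    induction u with
    | zero => intro _ s hs h; exact Nat.le_zero.mp hs ▸ h
    | succ n ih =>
      intro hu s hs h
      rcases Nat.lt_or_ge s (n+1) with h1 | h1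
      · have hn : τ n i = none := ih (by omega) s (by omega) h
        have := hmask (n+1) i (by omega) hu
        simpa using this hn
      · have : s = n+1 := by omega
        rwa [this] at h
  have hex : ∀ i : Fin L, ∃ t, τ t i = none := fun i => ⟨T, hfullmask i⟩
  set tstep : Fin L → ℕ := fun i => Nat.find (hex i) with htstep
  have hnone : ∀ i, τ (tstep i) i = none := fun i => Nat.find_spec (hex i)
  have hpos : ∀ i, 1 ≤ tstep i := by
    intro i
    by_contra h
    have : tstep i = 0 := by omega
    exact hfullclean i (this ▸ hnone i)
  have hle : ∀ i, tstep i ≤ T := fun i => Nat.find_le (hfullmask i)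
  have hprev : ∀ i, τ (tstep i - 1) i ≠ none := by
    intro i
    exact Nat.find_min (hex i) (show tstep i - 1 < tstep i by have := hpos i; omega)
  have hmem : ∀ i, tstep i ∈ Finset.Icc 1 T ∧ i ∈ I (tstep i) := by
    intro i
    refine ⟨Finset.mem_Icc.mpr ⟨hpos i, hle i⟩, ?_⟩
    rw [hI]
    exact Finset.mem_filter.mpr ⟨Finset.mem_univ i, hnone i, hprev i⟩
  -- uniqueness
  have huniq : ∀ i, ∀ t ∈ Finset.Icc 1 T,
      ((τ t i = none ∧ τ (t-1) i ≠ none) ↔ t = tstep i) := by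
    intro i t ht
    rw [Finset.mem_Icc] at ht
    constructor
    · rintro ⟨h1, h2⟩
      have hle' : tstep i ≤ t := Nat.find_min' (hex i) h1
      rcases Nat.lt_or_ge (tstep i) t with h3 | h3
      · exact absurd (mono i (t-1) (by omega) (tstep i) (by omega) (hnone i)) h2
      · omega
    · rintro rfl; exact ⟨hnone i, hprev i⟩
  refine ⟨tstep, hmem, ?_⟩
  have hPne : ∀ t ∈ Finset.Icc 1 T, Pθ t / Pref t ≠ 0 := fun t ht =>
    ne_of_gt (div_pos (hPθ t ht) (hPref t ht))
  rw [← Finset.prod_div_distrib, Real.log_prod hPne]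
  have hstep : ∀ t ∈ Finset.Icc 1 T, Real.log (Pθ t / Pref t)
      = ∑ i ∈ I t, (Real.log (a t i) - Real.log (b t i)) := by
    intro t ht
    rw [hratio t ht, Real.log_prod (fun i _ => ne_of_gt (div_pos (ha t i) (hb t i)))]
    exact Finset.sum_congr rfl fun i _ =>
      Real.log_div (ne_of_gt (ha t i)) (ne_of_gt (hb t i))
  rw [Finset.sum_congr rfl hstep]
  have : ∀ t ∈ Finset.Icc 1 T, ∑ i ∈ I t, (Real.log (a t i) - Real.log (b t i))
      = ∑ i : Fin L, if τ t i = none ∧ τ (t-1) i ≠ none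
          then Real.log (a t i) - Real.log (b t i) else 0 := by
    intro t ht
    rw [hI t, Finset.sum_filter]
  rw [Finset.sum_congr rfl this, Finset.sum_comm]
  refine Finset.sum_congr rfl fun i _ => ?_
  rw [Finset.sum_eq_single_of_mem (tstep i) (hmem i).1]
  · rw [if_pos ⟨hnone i, hprev i⟩]
  · intro t ht hne
    rw [if_neg]
    intro hc
    exact hne ((huniq i t ht).mp hc)
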